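/- Let G be a finite simple graph on n vertices and let h, k be integers with 1 ≤ h ≤ k ≤ n/2. If λ is an eigenvalue of the Laplacian matrix of the h-token graph F_h(G), then λ is an eigenvalue of the Laplacian matrix of the k-token graph F_k(G). -/

import Mathlib

open Finset Matrix
open scoped symmDiff

/-!
On functions `f : Finset V → ℝ` consider the up operator `U f S = ∑ c ∈ S, f (S \ {c})` and its
adjoint, the down operator `D`. Summing `f S - f (τ S)` over the transpositions `τ = (a b)`, with
`(a, b)` running over the ordered pairs with `G.Adj a b`, gives one operator on all subsets which,
on the subsets of size `k`, is twice the Laplacian of `F_k(G)`. Since `U` commutes with every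
permutation of `V`, it commutes with this operator, so it maps `λ`-eigenvectors of `F_m(G)` to
`λ`-eigenvectors of `F_{m+1}(G)` or to `0`. The relation `DU - UD = |Sᶜ| - |S|` gives
`‖U f‖² = ‖D f‖² + (n - 2m) ‖f‖²` for `f` supported on `m`-subsets, so `U` is injective there as
long as `2m < n`; iterating `U` from level `h` to level `k` proves the theorem.
-/

/-- The `k`-token graph of a graph `G`: vertices are the `k`-subsets of the vertex set,
two subsets `A`, `B` being adjacent iff their symmetric difference is a pair `{a, b}`
with `a ∈ A`, `b ∈ B` and `a` adjacent to `b` in `G`. -/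
def tokenGraph {V : Type*} [DecidableEq V] (G : SimpleGraph V) (k : ℕ) :
    SimpleGraph {s : Finset V // s.card = k} where
  Adj A B := ∃ a b, a ∈ A.1 ∧ b ∈ B.1 ∧ G.Adj a b ∧ A.1 ∆ B.1 = {a, b}
  symm := by
    constructor
    rintro A B ⟨a, b, ha, hb, hab, hd⟩
    exact ⟨b, a, hb, ha, hab.symm, by rw [symmDiff_comm, hd, Finset.pair_comm]⟩
  loopless := by
    constructor
    rintro A ⟨a, b, ha, hb, hab, hd⟩
    rw [symmDiff_self] at hd
    exact Finset.insert_ne_empty a {b} hd.symm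

/-- The Laplacian matrix (over `ℝ`) of a finite simple graph: `L = D - A`. -/
noncomputable def Lap {V : Type*} [Fintype V] [DecidableEq V] (G : SimpleGraph V) :
    Matrix V V ℝ :=
  letI := Classical.decRel G.Adj
  G.lapMatrix ℝ

section Levels

variable {V : Type*} {k : ℕ}

def SupportedOnLevel (m : ℕ) (f : Finset V → ℝ) : Prop :=
  ∀ S : Finset V, S.card ≠ m → f S = 0

def extendByZero (v : {s : Finset V // s.card = k} → ℝ) (S : Finset V) : ℝ :=
  if h : S.card = k then v ⟨S, h⟩ else 0

lemma extendByZero_val (v : {s : Finset V // s.card = k} → ℝ) (B : {s : Finset V // s.card = k}) :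
    extendByZero v B.1 = v B :=
  dif_pos B.2

lemma supportedOnLevel_extendByZero (v : {s : Finset V // s.card = k} → ℝ) :
    SupportedOnLevel k (extendByZero v) :=
  fun _ h => dif_neg h

lemma extendByZero_injective :
    Function.Injective (extendByZero : ({s : Finset V // s.card = k} → ℝ) → Finset V → ℝ) :=
  fun v w h => funext fun B => by rw [← extendByZero_val v, h, extendByZero_val]

lemma extendByZero_restrict {f : Finset V → ℝ} (hf : SupportedOnLevel k f) :
    extendByZero (fun B : {s : Finset V // s.card = k} => f B.1) = f := by
  funext S
  by_cases h : S.card = k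
  · exact dif_pos h
  · rw [hf S h]
    exact dif_neg h

lemma extendByZero_zero : extendByZero (0 : {s : Finset V // s.card = k} → ℝ) = 0 := by
  funext S
  simp [extendByZero]

lemma extendByZero_smul (c : ℝ) (v : {s : Finset V // s.card = k} → ℝ) :
    extendByZero (c • v) = c • extendByZero v := by
  funext S
  by_cases h : S.card = k <;> simp [extendByZero, h]

end Levels

section UpDown

variable {V : Type*} [DecidableEq V]

def upOp (f : Finset V → ℝ) (S : Finset V) : ℝ := ∑ c ∈ S, f (S.erase c)

def downOp [Fintype V] (f : Finset V → ℝ) (S : Finset V) : ℝ := ∑ b ∈ Sᶜ, f (insert b S)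

lemma upOp_smul (c : ℝ) (f : Finset V → ℝ) : upOp (c • f) = c • upOp f := by
  ext S
  simp [upOp, mul_sum]

lemma SupportedOnLevel.upOp {m : ℕ} {f : Finset V → ℝ} (hf : SupportedOnLevel m f) :
    SupportedOnLevel (m + 1) (upOp f) := fun S hS =>
  sum_eq_zero fun c hc => hf _ <| by
    have := card_pos.2 ⟨c, hc⟩
    rw [card_erase_of_mem hc]; omega

lemma upOp_map (σ : Equiv.Perm V) (f : Finset V → ℝ) (S : Finset V) :
    upOp f (S.map σ.toEmbedding) = ∑ c ∈ S, f ((S.erase c).map σ.toEmbedding) := by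
  simp [upOp, map_erase]

variable [Fintype V]

lemma sum_downOp_mul (g f : Finset V → ℝ) :
    ∑ S, downOp g S * f S = ∑ S, g S * upOp f S := by
  simp only [downOp, upOp, sum_mul, mul_sum]
  rw [sum_comm' (t' := univ) (s' := fun b : V => univ.filter fun S : Finset V => b ∉ S) (by simp),
    sum_comm' (t' := univ) (s' := fun c : V => univ.filter fun T : Finset V => c ∈ T) (by simp)]
  refine sum_congr rfl fun b _ => ?_
  refine sum_nbij' (insert b) (·.erase b) (by simp) (by simp)
    (fun S hS => erase_insert (by simpa using hS)) (fun T hT => insert_erase (by simpa using hT))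
    fun S hS => by rw [erase_insert (by simpa using hS)]

lemma downOp_upOp (f : Finset V → ℝ) (S : Finset V) :
    downOp (upOp f) S = upOp (downOp f) S + ((Sᶜ.card : ℝ) - S.card) * f S := by
  have hdown : ∀ b ∈ Sᶜ, upOp f (insert b S) = f S + ∑ c ∈ S, f (insert b (S.erase c)) := by
    intro b hb
    rw [mem_compl] at hb
    rw [upOp, sum_insert hb, erase_insert hb]
    congr 1
    exact sum_congr rfl fun c hc => by rw [erase_insert_of_ne (ne_of_mem_of_not_mem hc hb).symm]
  have hup : ∀ c ∈ S, downOp f (S.erase c) = f S + ∑ b ∈ Sᶜ, f (insert b (S.erase c)) := by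
    intro c hc
    rw [downOp, compl_erase, sum_insert (by simpa using hc), insert_erase hc]
  rw [downOp, upOp, sum_congr rfl hdown, sum_congr rfl hup, sum_add_distrib, sum_add_distrib,
    sum_const, sum_const, sum_comm]
  simp only [nsmul_eq_mul]
  ring

lemma sum_upOp_sq (f : Finset V → ℝ) :
    ∑ S, upOp f S ^ 2 = ∑ S, downOp f S ^ 2 + ∑ S, ((Sᶜ.card : ℝ) - S.card) * f S ^ 2 := by
  calc ∑ S, upOp f S ^ 2 = ∑ S, downOp (upOp f) S * f S := by
        rw [sum_downOp_mul]; simp only [sq]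
    _ = ∑ S, f S * upOp (downOp f) S + ∑ S, ((Sᶜ.card : ℝ) - S.card) * f S ^ 2 := by
        rw [← sum_add_distrib]
        exact sum_congr rfl fun S _ => by rw [downOp_upOp]; ring
    _ = _ := by rw [← sum_downOp_mul]; simp only [sq]

lemma upOp_ne_zero {m : ℕ} {f : Finset V → ℝ} (hf : SupportedOnLevel m f)
    (hm : 2 * m < Fintype.card V) (hf0 : f ≠ 0) : upOp f ≠ 0 := by
  intro hup
  have hcoeff : ∀ S : Finset V, S.card = m → 0 < (Sᶜ.card : ℝ) - S.card := by
    intro S hS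
    rw [card_compl, Nat.cast_sub (card_le_univ S), hS]
    have : (2 * m : ℝ) < Fintype.card V := by exact_mod_cast hm
    linarith
  have hterm : ∀ S : Finset V, 0 ≤ ((Sᶜ.card : ℝ) - S.card) * f S ^ 2 := by
    intro S
    by_cases hS : S.card = m
    · exact mul_nonneg (hcoeff S hS).le (sq_nonneg _)
    · simp [hf S hS]
  have hzero : ∑ S, ((Sᶜ.card : ℝ) - S.card) * f S ^ 2 = 0 := by
    have h := sum_upOp_sq f
    simp only [hup, Pi.zero_apply, zero_pow two_ne_zero, sum_const_zero] at h
    linarith [sum_nonneg fun S (_ : S ∈ univ) => sq_nonneg (downOp f S),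
      sum_nonneg fun S (_ : S ∈ univ) => hterm S]
  refine hf0 (funext fun S => ?_)
  by_cases hS : S.card = m
  · have := (sum_eq_zero_iff_of_nonneg fun S _ => hterm S).1 hzero S (mem_univ S)
    simpa [(hcoeff S hS).ne'] using this
  · exact hf S hS

end UpDown

section InsertErase

variable {V : Type*} [DecidableEq V]

lemma map_swap_eq_self {S : Finset V} {a b : V} (h : a ∈ S ↔ b ∈ S) :
    S.map (Equiv.swap a b).toEmbedding = S := by
  ext x
  rw [mem_map_equiv, Equiv.symm_swap, Equiv.swap_apply_def]
  split_ifs with hxa hxb <;> simp_all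

lemma map_swap_eq_insert_erase {S : Finset V} {a b : V} (ha : a ∈ S) (hb : b ∉ S) :
    S.map (Equiv.swap a b).toEmbedding = insert b (S.erase a) := by
  ext x
  rw [mem_map_equiv, Equiv.symm_swap, Equiv.swap_apply_def, mem_insert, mem_erase]
  split_ifs with hxa hxb <;> subst_vars <;> simp_all [ne_of_mem_of_not_mem ha hb]

lemma symmDiff_insert_erase {A : Finset V} {a b : V} (ha : a ∈ A) (hb : b ∉ A) :
    A ∆ insert b (A.erase a) = {a, b} := by
  ext x
  simp only [mem_symmDiff, mem_insert, mem_erase, mem_singleton]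
  by_cases hxa : x = a <;> by_cases hxb : x = b <;> subst_vars <;> tauto

lemma eq_insert_erase_of_symmDiff_eq {A B : Finset V} {a b : V} (ha : a ∈ A) (hb : b ∈ B)
    (hd : A ∆ B = {a, b}) : b ∉ A ∧ B = insert b (A.erase a) := by
  have hx : ∀ x, (x ∈ A ∧ x ∉ B ∨ x ∈ B ∧ x ∉ A) ↔ x = a ∨ x = b := fun x => by
    rw [← mem_symmDiff, hd, mem_insert, mem_singleton]
  have hbA : b ∉ A := fun h => by have := (hx b).2 (Or.inr rfl); tauto
  refine ⟨hbA, ?_⟩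
  ext x
  have := hx x
  simp only [mem_insert, mem_erase]
  by_cases hxa : x = a <;> by_cases hxb : x = b <;> subst_vars <;> tauto

lemma card_insert_erase_of_mem_of_notMem {A : Finset V} {a b : V} (ha : a ∈ A) (hb : b ∉ A) :
    (insert b (A.erase a)).card = A.card := by
  rw [card_insert_of_notMem fun h => hb (mem_of_mem_erase h), card_erase_add_one ha]

lemma eq_of_insert_erase_eq {A : Finset V} {a a' b b' : V} (ha : a ∈ A) (hb : b ∉ A)
    (h : insert b (A.erase a) = insert b' (A.erase a')) :
    a = a' ∧ b = b' := by
  have hb_mem : b ∈ insert b' (A.erase a') := h ▸ mem_insert_self b _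
  have ha_mem : a ∉ insert b' (A.erase a') := h ▸ by
    simp [ne_of_mem_of_not_mem ha hb]
  simp only [mem_insert, mem_erase, not_or, not_and_or] at hb_mem ha_mem
  refine ⟨?_, ?_⟩ <;> tauto

end InsertErase

section SwapLaplacian

variable {V : Type*} [DecidableEq V] [Fintype V]

def swapLaplacian (G : SimpleGraph V) [DecidableRel G.Adj] (f : Finset V → ℝ) (S : Finset V) :
    ℝ :=
  ∑ a, ∑ b, if G.Adj a b then f S - f (S.map (Equiv.swap a b).toEmbedding) else 0

lemma upOp_swapLaplacian (G : SimpleGraph V) [DecidableRel G.Adj] (f : Finset V → ℝ) :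
    upOp (swapLaplacian G f) = swapLaplacian G (upOp f) := by
  ext S
  simp only [upOp, swapLaplacian]
  rw [sum_comm]
  refine sum_congr rfl fun a _ => ?_
  rw [sum_comm]
  refine sum_congr rfl fun b _ => ?_
  split_ifs
  · rw [sum_sub_distrib]
    exact congrArg _ (upOp_map _ f S).symm
  · exact sum_const_zero

lemma swapLaplacian_eq_two_mul_sum (G : SimpleGraph V) [DecidableRel G.Adj] (f : Finset V → ℝ)
    (S : Finset V) :
    swapLaplacian G f S = 2 * ∑ a ∈ S, ∑ b ∈ Sᶜ,
      if G.Adj a b then f S - f (insert b (S.erase a)) else 0 := by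
  set t : V → V → ℝ := fun a b =>
    if G.Adj a b then f S - f (S.map (Equiv.swap a b).toEmbedding) else 0 with ht
  set s : V → V → ℝ := fun a b => if a ∈ S then if b ∈ Sᶜ then t a b else 0 else 0 with hs
  have hsplit : ∀ a b, t a b = s a b + s b a := by
    intro a b
    by_cases ha : a ∈ S <;> by_cases hb : b ∈ S
    all_goals simp [hs, ha, hb, ht, G.adj_comm b a, Equiv.swap_comm b a, map_swap_eq_self]
  calc swapLaplacian G f S = ∑ a, ∑ b, (s a b + s b a) := by
        simp only [← hsplit]
        rfl
    _ = 2 * ∑ a, ∑ b, s a b := by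
        simp only [sum_add_distrib]
        rw [sum_comm (f := fun a b => s b a)]
        ring
    _ = _ := by
        simp only [hs, ← ite_sum_zero, sum_ite_mem_eq]
        refine congrArg _ (sum_congr rfl fun a ha => sum_congr rfl fun b hb => ?_)
        simp only [ht, map_swap_eq_insert_erase ha (mem_compl.1 hb)]

end SwapLaplacian

lemma Lap_eq_lapMatrix {W : Type*} [Fintype W] [DecidableEq W] (H : SimpleGraph W)
    [DecidableRel H.Adj] : Lap H = H.lapMatrix ℝ := by
  unfold Lap
  congr

lemma Lap_mulVec_apply {W : Type*} [Fintype W] [DecidableEq W] (H : SimpleGraph W)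
    [DecidableRel H.Adj] (v : W → ℝ) (x : W) :
    (Lap H *ᵥ v) x = ∑ y ∈ H.neighborFinset x, (v x - v y) := by
  rw [Lap_eq_lapMatrix, SimpleGraph.lapMatrix_mulVec_apply, sum_sub_distrib, sum_const,
    SimpleGraph.card_neighborFinset_eq_degree, nsmul_eq_mul]

section TokenGraph

variable {V : Type*} [DecidableEq V]

lemma tokenGraph_adj_iff (G : SimpleGraph V) {k : ℕ} (A B : {s : Finset V // s.card = k}) :
    (tokenGraph G k).Adj A B ↔ ∃ a ∈ A.1, ∃ b ∉ A.1, G.Adj a b ∧ B.1 = insert b (A.1.erase a) := by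
  constructor
  · rintro ⟨a, b, ha, hb, hab, hd⟩
    obtain ⟨hbA, hB⟩ := eq_insert_erase_of_symmDiff_eq ha hb hd
    exact ⟨a, ha, b, hbA, hab, hB⟩
  · rintro ⟨a, ha, b, hb, hab, hB⟩
    exact ⟨a, b, ha, hB ▸ mem_insert_self _ _, hab, hB ▸ symmDiff_insert_erase ha hb⟩

variable [Fintype V] {k : ℕ}

lemma sum_neighborFinset_tokenGraph (G : SimpleGraph V) [DecidableRel G.Adj]
    [DecidableRel (tokenGraph G k).Adj] (g : Finset V → ℝ) (B : {s : Finset V // s.card = k}) :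
    ∑ B' ∈ (tokenGraph G k).neighborFinset B, g B'.1 =
      ∑ a ∈ B.1, ∑ b ∈ B.1ᶜ, if G.Adj a b then g (insert b (B.1.erase a)) else 0 := by
  rw [← sum_product' (f := fun a b => if G.Adj a b then g (insert b (B.1.erase a)) else 0),
    ← sum_filter]
  symm
  refine sum_bij (fun p hp => ⟨insert p.2 (B.1.erase p.1), ?_⟩) ?_ ?_ ?_ fun _ _ => rfl
  · obtain ⟨hp, -⟩ := mem_filter.1 hp
    obtain ⟨ha, hb⟩ := mem_product.1 hp
    rw [card_insert_erase_of_mem_of_notMem ha (mem_compl.1 hb), B.2]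
  · intro p hp
    obtain ⟨hp, hadj⟩ := mem_filter.1 hp
    obtain ⟨ha, hb⟩ := mem_product.1 hp
    rw [SimpleGraph.mem_neighborFinset, tokenGraph_adj_iff]
    exact ⟨p.1, ha, p.2, mem_compl.1 hb, hadj, rfl⟩
  · intro p hp q _ hpq
    obtain ⟨ha, hb⟩ := mem_product.1 (mem_filter.1 hp).1
    obtain ⟨h1, h2⟩ := eq_of_insert_erase_eq ha (mem_compl.1 hb) (congrArg Subtype.val hpq)
    exact Prod.ext h1 h2
  · intro B' hB'
    rw [SimpleGraph.mem_neighborFinset, tokenGraph_adj_iff] at hB'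
    obtain ⟨a, ha, b, hb, hab, hB'⟩ := hB'
    exact ⟨(a, b), mem_filter.2 ⟨mem_product.2 ⟨ha, mem_compl.2 hb⟩, hab⟩, Subtype.ext hB'.symm⟩

lemma swapLaplacian_extendByZero (G : SimpleGraph V) [DecidableRel G.Adj]
    (v : {s : Finset V // s.card = k} → ℝ) :
    swapLaplacian G (extendByZero v) = extendByZero ((2 : ℝ) • (Lap (tokenGraph G k) *ᵥ v)) := by
  classical
  funext S
  by_cases h : S.card = k
  · let B : {s : Finset V // s.card = k} := ⟨S, h⟩
    rw [← show B.1 = S from rfl, extendByZero_val, Pi.smul_apply, Lap_mulVec_apply,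
      swapLaplacian_eq_two_mul_sum, smul_eq_mul,
      ← sum_neighborFinset_tokenGraph G (fun T => extendByZero v B.1 - extendByZero v T)]
    simp only [extendByZero_val]
  · rw [supportedOnLevel_extendByZero _ S h]
    refine sum_eq_zero fun a _ => sum_eq_zero fun b _ => ?_
    have hS : (S.map (Equiv.swap a b).toEmbedding).card ≠ k := by rwa [card_map]
    rw [supportedOnLevel_extendByZero v S h, supportedOnLevel_extendByZero v _ hS]
    simp

lemma exists_tokenGraph_eigenvector_iff (G : SimpleGraph V) [DecidableRel G.Adj] (lam : ℝ) :
    (∃ v : {s : Finset V // s.card = k} → ℝ, v ≠ 0 ∧ Lap (tokenGraph G k) *ᵥ v = lam • v) ↔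
      ∃ f : Finset V → ℝ, SupportedOnLevel k f ∧ f ≠ 0 ∧ swapLaplacian G f = (2 * lam) • f := by
  constructor
  · rintro ⟨v, hv0, hv⟩
    refine ⟨extendByZero v, supportedOnLevel_extendByZero v, fun h => hv0 ?_, ?_⟩
    · exact extendByZero_injective (h.trans extendByZero_zero.symm)
    · rw [swapLaplacian_extendByZero, hv, smul_smul, extendByZero_smul]
  · rintro ⟨f, hf, hf0, hfe⟩
    have hext := extendByZero_restrict hf
    refine ⟨fun B => f B.1, fun h => hf0 ?_, ?_⟩
    · rw [← hext, h, extendByZero_zero]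
    · have h2 : (2 : ℝ) • (Lap (tokenGraph G k) *ᵥ fun B => f B.1) = (2 * lam) • fun B => f B.1 :=
        extendByZero_injective <| by
          rw [← swapLaplacian_extendByZero, hext, hfe, extendByZero_smul, hext]
      rw [← smul_smul] at h2
      exact smul_right_injective _ two_ne_zero h2

end TokenGraph

theorem eigenvalue_token_mono_general (n h k : ℕ) (hhk : h ≤ k) (hkn : 2 * k ≤ n)
    (G : SimpleGraph (Fin n)) (lam : ℝ)
    (hlam : ∃ v : {s : Finset (Fin n) // s.card = h} → ℝ,
      v ≠ 0 ∧ Lap (tokenGraph G h) *ᵥ v = lam • v) :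
    ∃ w : {s : Finset (Fin n) // s.card = k} → ℝ,
      w ≠ 0 ∧ Lap (tokenGraph G k) *ᵥ w = lam • w := by
  classical
  rw [exists_tokenGraph_eigenvector_iff] at hlam ⊢
  induction k, hhk using Nat.le_induction with
  | base => exact hlam
  | succ m _ ih =>
    obtain ⟨f, hf, hf0, hfe⟩ := ih (by omega)
    refine ⟨upOp f, hf.upOp, upOp_ne_zero hf (by rw [Fintype.card_fin]; omega) hf0, ?_⟩
    rw [← upOp_swapLaplacian, hfe, upOp_smul]

/-- For `1 ≤ h ≤ k ≤ n/2`, every Laplacian eigenvalue of the `h`-token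
graph `F_h(G)` is a Laplacian eigenvalue of the `k`-token graph `F_k(G)`. -/
theorem eigenvalue_token_mono (n h k : ℕ) (hh : 1 ≤ h) (hhk : h ≤ k) (hkn : 2 * k ≤ n)
    (G : SimpleGraph (Fin n)) (lam : ℝ)
    (hlam : ∃ v : {s : Finset (Fin n) // s.card = h} → ℝ,
      v ≠ 0 ∧ Lap (tokenGraph G h) *ᵥ v = lam • v) :
    ∃ w : {s : Finset (Fin n) // s.card = k} → ℝ,
      w ≠ 0 ∧ Lap (tokenGraph G k) *ᵥ w = lam • w :=
  eigenvalue_token_mono_general n h k hhk hkn G lam hlam
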